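/- Fix λ > 1, y > 0 and d ∈ ℝ. Then there exists exactly one x ∈ (|d|/y, ∞) satisfying the criticality equation L + M y²/√(x²y²−d²) = 2√(A(x,y,d)). -/

import Mathlib

/-!
Write `s(x) = √(x²y² − d²)` and `F(x) = 2√A(x) − L − M y²/s(x)`, whose zeros are the solutions
of the criticality equation. On `(|d|/y, ∞)` the radicand increases with `x`, so `A` is
nondecreasing and `M y²/s` strictly decreasing: `F` is strictly increasing. As `x ↓ |d|/y`,
`s(x) ↓ 0` while `A` stays bounded, so `F → −∞`; as `x → ∞`, `A → ∞` while `M y²/s → 0`, so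
`F → ∞`. By the intermediate value theorem `F` has exactly one zero.
-/

noncomputable section

def Afun (l x y d : ℝ) : ℝ :=
  (x ^ 2 + y ^ 2) * (l ^ 2 + 1 / l ^ 2) / 2
    + (l ^ 2 - 1 / l ^ 2) * Real.sqrt (x ^ 2 * y ^ 2 - d ^ 2) + 2 * d

open Filter Topology Set

theorem existsUnique_zero_of_strictMonoOn_Ioi {f : ℝ → ℝ} {a : ℝ}
    (hcont : ContinuousOn f (Ioi a)) (hmono : StrictMonoOn f (Ioi a))
    (hbot : Tendsto f (𝓝[>] a) atBot) (htop : Tendsto f atTop atTop) :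
    ∃! x, a < x ∧ f x = 0 := by
  obtain ⟨b, hfb, hb⟩ :=
    ((hbot.eventually (eventually_lt_atBot 0)).and self_mem_nhdsWithin).exists
  obtain ⟨c, hfc, hbc⟩ :=
    ((htop.eventually (eventually_gt_atTop 0)).and (eventually_ge_atTop b)).exists
  have hsub : Icc b c ⊆ Ioi a := fun x hx => lt_of_lt_of_le hb hx.1
  obtain ⟨x, hx, hfx⟩ := intermediate_value_Icc hbc (hcont.mono hsub) ⟨hfb.le, hfc.le⟩
  exact ⟨x, ⟨hsub hx, hfx⟩, fun x' hx' => hmono.injOn hx'.1 (hsub hx) (hx'.2.trans hfx.symm)⟩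

lemma sq_sub_one_div_sq_pos {l : ℝ} (hl : 1 < l) : 0 < l ^ 2 - 1 / l ^ 2 := by
  have : 1 / l ^ 2 < 1 := (div_lt_one (by positivity)).2 (by nlinarith)
  nlinarith

section Criticality

variable {l y d : ℝ}

def criticalityGap (l y d x : ℝ) : ℝ :=
  2 * √(Afun l x y d)
    - ((l ^ 2 + 1 / l ^ 2) + (l ^ 2 - 1 / l ^ 2) * y ^ 2 / √(x ^ 2 * y ^ 2 - d ^ 2))

lemma criticalityGap_eq_zero_iff {x : ℝ} :
    criticalityGap l y d x = 0 ↔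
      (l ^ 2 + 1 / l ^ 2) + (l ^ 2 - 1 / l ^ 2) * y ^ 2 / √(x ^ 2 * y ^ 2 - d ^ 2)
        = 2 * √(Afun l x y d) :=
  sub_eq_zero.trans eq_comm

@[fun_prop]
lemma continuous_Afun : Continuous fun x => Afun l x y d := by
  unfold Afun
  fun_prop

lemma sq_mul_sq_sub_sq_pos (hy : 0 < y) {x : ℝ} (hx : |d| / y < x) :
    0 < x ^ 2 * y ^ 2 - d ^ 2 := by
  have hxy : |d| < x * y := (div_lt_iff₀ hy).1 hx
  nlinarith [abs_nonneg d, sq_abs d]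

lemma strictMonoOn_sq_mul_sq_sub_sq (hy : 0 < y) :
    StrictMonoOn (fun x => x ^ 2 * y ^ 2 - d ^ 2) (Ioi (|d| / y)) := by
  intro x₁ hx₁ x₂ _ h
  have hx₁ : 0 < x₁ := (div_nonneg (abs_nonneg d) hy.le).trans_lt hx₁
  have : x₁ ^ 2 < x₂ ^ 2 := by nlinarith
  simp only
  nlinarith [pow_pos hy 2]

lemma strictMonoOn_sqrt_sq_mul_sq_sub_sq (hy : 0 < y) :
    StrictMonoOn (fun x => √(x ^ 2 * y ^ 2 - d ^ 2)) (Ioi (|d| / y)) :=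
  fun _ hx₁ _ hx₂ h =>
    Real.sqrt_lt_sqrt (sq_mul_sq_sub_sq_pos hy hx₁).le (strictMonoOn_sq_mul_sq_sub_sq hy hx₁ hx₂ h)

lemma monotoneOn_Afun (hl : 1 < l) (hy : 0 < y) :
    MonotoneOn (fun x => Afun l x y d) (Ioi (|d| / y)) := by
  intro x₁ hx₁ x₂ hx₂ h
  have hsq : x₁ ^ 2 ≤ x₂ ^ 2 :=
    pow_le_pow_left₀ ((div_nonneg (abs_nonneg d) hy.le).trans hx₁.le) h 2
  have hs := (strictMonoOn_sqrt_sq_mul_sq_sub_sq (d := d) hy).monotoneOn hx₁ hx₂ h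
  simp only [Afun]
  gcongr
  exact (sq_sub_one_div_sq_pos hl).le

lemma strictMonoOn_criticalityGap (hl : 1 < l) (hy : 0 < y) :
    StrictMonoOn (criticalityGap l y d) (Ioi (|d| / y)) := by
  intro x₁ hx₁ x₂ hx₂ h
  have hA := Real.sqrt_le_sqrt (monotoneOn_Afun (d := d) hl hy hx₁ hx₂ h.le)
  have hs := strictMonoOn_sqrt_sq_mul_sq_sub_sq (d := d) hy hx₁ hx₂ h
  have hs₁ := Real.sqrt_pos.2 (sq_mul_sq_sub_sq_pos hy hx₁)
  have hM : 0 < (l ^ 2 - 1 / l ^ 2) * y ^ 2 := mul_pos (sq_sub_one_div_sq_pos hl) (pow_pos hy 2)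
  have := div_lt_div_of_pos_left hM hs₁ hs
  simp only [criticalityGap]
  linarith

lemma continuousOn_criticalityGap (hy : 0 < y) :
    ContinuousOn (criticalityGap l y d) (Ioi (|d| / y)) := by
  have hs : ∀ x ∈ Ioi (|d| / y), √(x ^ 2 * y ^ 2 - d ^ 2) ≠ 0 :=
    fun x hx => (Real.sqrt_pos.2 (sq_mul_sq_sub_sq_pos hy hx)).ne'
  unfold criticalityGap
  fun_prop (disch := assumption)

lemma tendsto_criticalityGap_nhdsGT (hl : 1 < l) (hy : 0 < y) :
    Tendsto (criticalityGap l y d) (𝓝[>] (|d| / y)) atBot := by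
  have hs : Tendsto (fun x => √(x ^ 2 * y ^ 2 - d ^ 2)) (𝓝[>] (|d| / y)) (𝓝[>] 0) := by
    refine tendsto_nhdsWithin_iff.2 ⟨?_, eventually_nhdsWithin_of_forall
      fun x hx => Real.sqrt_pos.2 (sq_mul_sq_sub_sq_pos hy hx)⟩
    have h0 : √((|d| / y) ^ 2 * y ^ 2 - d ^ 2) = 0 := by
      rw [div_pow, div_mul_cancel₀ _ (pow_pos hy 2).ne', sq_abs, sub_self, Real.sqrt_zero]
    exact h0 ▸ (Continuous.tendsto (by fun_prop) _).mono_left nhdsWithin_le_nhds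
  have hM : 0 < (l ^ 2 - 1 / l ^ 2) * y ^ 2 := mul_pos (sq_sub_one_div_sq_pos hl) (pow_pos hy 2)
  have hinv := (tendsto_inv_nhdsGT_zero.comp hs).const_mul_atTop hM
  have hA : Tendsto (fun x => 2 * √(Afun l x y d) - (l ^ 2 + 1 / l ^ 2)) (𝓝[>] (|d| / y))
      (𝓝 (2 * √(Afun l (|d| / y) y d) - (l ^ 2 + 1 / l ^ 2))) :=
    (Continuous.tendsto (by fun_prop) _).mono_left nhdsWithin_le_nhds
  refine (hA.add_atBot (tendsto_neg_atTop_atBot.comp hinv)).congr fun x => ?_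
  simp only [criticalityGap, Function.comp_apply, div_eq_mul_inv]
  ring

lemma tendsto_criticalityGap_atTop (hl : 1 < l) (hy : 0 < y) :
    Tendsto (criticalityGap l y d) atTop atTop := by
  have hsq : Tendsto (fun x : ℝ => x ^ 2) atTop atTop := tendsto_pow_atTop two_ne_zero
  have hL : 0 < l ^ 2 + 1 / l ^ 2 := by positivity
  have hM := sq_sub_one_div_sq_pos hl
  have hA : Tendsto (fun x => Afun l x y d) atTop atTop := by
    refine tendsto_atTop_mono (fun x => ?_)
      (tendsto_atTop_add_const_right _ (2 * d) (hsq.atTop_mul_const (half_pos hL)))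
    have := mul_nonneg hM.le (Real.sqrt_nonneg (x ^ 2 * y ^ 2 - d ^ 2))
    simp only [Afun]
    nlinarith [sq_nonneg y]
  have hs : Tendsto (fun x => √(x ^ 2 * y ^ 2 - d ^ 2)) atTop atTop :=
    Real.tendsto_sqrt_atTop.comp
      (tendsto_atTop_add_const_right _ _ (hsq.atTop_mul_const (pow_pos hy 2)))
  have hrest : Tendsto
      (fun x => (l ^ 2 + 1 / l ^ 2) + (l ^ 2 - 1 / l ^ 2) * y ^ 2 / √(x ^ 2 * y ^ 2 - d ^ 2)) atTop (𝓝 ((l ^ 2 + 1 / l ^ 2) + 0)) :=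
    tendsto_const_nhds.add (tendsto_const_nhds.div_atTop hs)
  exact ((Real.tendsto_sqrt_atTop.comp hA).const_mul_atTop two_pos).atTop_add hrest.neg

end Criticality

/-- For fixed `λ > 1`, `y > 0` and `d ∈ ℝ`, there exists exactly one `x ∈ (|d|/y, ∞)`
satisfying the criticality equation `L + M y²/√(x²y²−d²) = 2√(A(x,y,d))`. -/
theorem criticality_existsUnique (l : ℝ) (hl : 1 < l) (y d : ℝ) (hy : 0 < y) :
    ∃! x : ℝ, |d| / y < x ∧
      (l ^ 2 + 1 / l ^ 2) + (l ^ 2 - 1 / l ^ 2) * y ^ 2 / Real.sqrt (x ^ 2 * y ^ 2 - d ^ 2)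
        = 2 * Real.sqrt (Afun l x y d) :=
  (existsUnique_congr fun _ => and_congr_right' criticalityGap_eq_zero_iff).1 <|
    existsUnique_zero_of_strictMonoOn_Ioi (continuousOn_criticalityGap hy)
      (strictMonoOn_criticalityGap hl hy) (tendsto_criticalityGap_nhdsGT hl hy)
      (tendsto_criticalityGap_atTop hl hy)
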